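/- Let R and S be Morita equivalent unital rings with Morita equivalence bimodules _R W_S and _S V_R. Then the induced maps f_V* : P(S) → P(R) and f_W* : P(R) → P(S) on spaces of Sylvester rank functions are mutually inverse bijections (indeed homeomorphisms) that preserve extreme points. -/

import Mathlib

universe u
open scoped NNReal ENNReal

/-- An extended Sylvester map rank function for a unital ring `R`: an `ℝ≥0∞`-valued function
on all maps between left `R`-modules, satisfying normalization, submultiplicativity,
direct sum additivity, two continuity conditions with respect to direct limits, and
additivity `rk(id_{M₂}) = rk(α) + rk(id_{coker α})`. -/
structure ExtendedSylvesterMapRank (R : Type u) [Ring R] where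
  r : ∀ {M N : Type u} [AddCommGroup M] [Module R M] [AddCommGroup N] [Module R N],
      (M →ₗ[R] N) → ℝ≥0∞
  r_zero : ∀ (M N : Type u) [AddCommGroup M] [Module R M] [AddCommGroup N] [Module R N],
      r (0 : M →ₗ[R] N) = 0
  r_id_ring : r (LinearMap.id : R →ₗ[R] R) = 1
  r_comp : ∀ {M N P : Type u} [AddCommGroup M] [Module R M] [AddCommGroup N] [Module R N]
      [AddCommGroup P] [Module R P] (α : M →ₗ[R] N) (β : N →ₗ[R] P),
      r (β.comp α) ≤ min (r α) (r β)
  r_prodMap : ∀ {M N P Q : Type u} [AddCommGroup M] [Module R M] [AddCommGroup N] [Module R N]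
      [AddCommGroup P] [Module R P] [AddCommGroup Q] [Module R Q]
      (α : M →ₗ[R] N) (β : P →ₗ[R] Q),
      r (α.prodMap β) = r α + r β
  continuity_from : ∀ (J : Type u) [Preorder J] [IsDirected J (· ≤ ·)] [Nonempty J]
      [DecidableEq J] (G : J → Type u) [∀ j, AddCommGroup (G j)] [∀ j, Module R (G j)]
      (f : ∀ i j, i ≤ j → G i →ₗ[R] G j) [DirectedSystem G (fun i j h => f i j h)]
      (M : Type u) [AddCommGroup M] [Module R M]
      (α : ∀ j, G j →ₗ[R] M) (αlim : Module.DirectLimit G f →ₗ[R] M),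
      (∀ (i j : J) (h : i ≤ j), (α j).comp (f i j h) = α i) →
      (∀ j : J, αlim.comp (Module.DirectLimit.of R J G f j) = α j) →
      Filter.Tendsto (fun j => r (α j)) Filter.atTop (nhds (r αlim))
  continuity_to : ∀ (J : Type u) [Preorder J] [IsDirected J (· ≤ ·)] [Nonempty J]
      [DecidableEq J] (G : J → Type u) [∀ j, AddCommGroup (G j)] [∀ j, Module R (G j)]
      (f : ∀ i j, i ≤ j → G i →ₗ[R] G j) [DirectedSystem G (fun i j h => f i j h)]
      (M : Type u) [AddCommGroup M] [Module R M], Module.Finite R M →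
      ∀ (α : ∀ j, M →ₗ[R] G j) (αlim : M →ₗ[R] Module.DirectLimit G f),
      (∀ (i j : J) (h : i ≤ j), (f i j h).comp (α i) = α j) →
      (∀ j : J, (Module.DirectLimit.of R J G f j).comp (α j) = αlim) →
      Filter.Tendsto (fun j => r (α j)) Filter.atTop (nhds (r αlim))
  additivity : ∀ {M N : Type u} [AddCommGroup M] [Module R M] [AddCommGroup N] [Module R N]
      (α : M →ₗ[R] N),
      r (LinearMap.id : N →ₗ[R] N) =
        r α + r (LinearMap.id : (N ⧸ LinearMap.range α) →ₗ[R] (N ⧸ LinearMap.range α))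

/-- `rk` is an extreme point of the convex set of extended Sylvester map rank functions:
it is not a nontrivial convex combination of two distinct such rank functions. -/
def IsExtremeRank (R : Type u) [Ring R] (rk : ExtendedSylvesterMapRank R) : Prop :=
  ∀ (rk₁ rk₂ : ExtendedSylvesterMapRank R) (t : ℝ≥0∞), 0 < t → t < 1 →
    (∀ (M N : Type u) [AddCommGroup M] [Module R M] [AddCommGroup N] [Module R N]
      (α : M →ₗ[R] N), rk.r α = t * rk₁.r α + (1 - t) * rk₂.r α) →
    rk₁ = rk₂

/-!
An equivalence `F : Mod R ≌ Mod S` is automatically additive and preserves finite products,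
cokernels, direct limits and finite generation (a module is finitely generated iff `⊤` is compact
in its lattice of submodules, and `F` induces isomorphisms of subobject lattices). Hence
`α ↦ rk (F α)` satisfies all axioms of a Sylvester map rank function except normalization.
The constant `rk (id_{F R})` is finite because `F R` is finitely generated, and nonzero because
`S ≅ F (G S)` is a quotient of some `F (R^m)`; dividing by it gives `comap e rk`, the paper's
`f_V^* rk`. The counit `F ∘ G ≅ id` shows that `comap e.symm` inverts `comap e`, and a mixture
`t ρ₁ + (1 - t) ρ₂` is carried to the mixture with weight `t d₁ / (t d₁ + (1 - t) d₂)`, where the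
`dᵢ` are the normalizing constants of the `ρᵢ`, so extreme points correspond.
-/

theorem OrderIso.isCompactElement_apply {α β : Type*} [PartialOrder α] [PartialOrder β]
    (e : α ≃o β) {k : α} (hk : IsCompactElement k) : IsCompactElement (e k) := by
  intro s u hs hdir hlub hku
  obtain ⟨_, ⟨y, hy, rfl⟩, hky⟩ := hk (e.symm '' s) (e.symm u) (hs.image _)
    (hdir.mono_comp e.symm.monotone) (e.symm.isLUB_image.2 (by simpa using hlub))
    (e.le_symm_apply.2 hku)
  exact ⟨y, hy, e.le_symm_apply.1 hky⟩

theorem ENNReal.exists_convexComb_div_eq {t d₁ d₂ : ℝ≥0∞} (ht₀ : 0 < t) (ht₁ : t < 1)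
    (hd₁ : d₁ ≠ 0) (hd₁' : d₁ ≠ ⊤) (hd₂ : d₂ ≠ 0) (hd₂' : d₂ ≠ ⊤) :
    ∃ s, 0 < s ∧ s < 1 ∧ ∀ a b : ℝ≥0∞,
      (t * a + (1 - t) * b) / (t * d₁ + (1 - t) * d₂) = s * (a / d₁) + (1 - s) * (b / d₂) := by
  set D := t * d₁ + (1 - t) * d₂
  have ht : 1 - t ≠ 0 := (tsub_pos_of_lt ht₁).ne'
  have hD : D ≠ 0 := by simp [D, ht₀.ne', hd₁]
  have hD' : D ≠ ⊤ := by simp [D, ENNReal.mul_eq_top, ht₁.ne_top, hd₁', hd₂']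
  have hs₁ : t * d₁ / D < 1 := by
    rw [ENNReal.div_lt_iff (.inl hD) (.inl hD'), one_mul]
    exact ENNReal.lt_add_right (by simp [ENNReal.mul_eq_top, ht₁.ne_top, hd₁'])
      (mul_ne_zero ht hd₂)
  have hs : 1 - t * d₁ / D = (1 - t) * d₂ / D := by
    refine ENNReal.sub_eq_of_eq_add hs₁.ne_top ?_
    rw [ENNReal.div_add_div_same, add_comm, ENNReal.div_self hD hD']
  have cancel (c x d : ℝ≥0∞) (hd : d ≠ 0) (hd' : d ≠ ⊤) : c * d / D * (x / d) = c * x / D := by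
    calc c * d / D * (x / d) = c * x / D * (d * d⁻¹) := by simp only [div_eq_mul_inv]; ring
      _ = c * x / D := by rw [ENNReal.mul_inv_cancel hd hd', mul_one]
  refine ⟨t * d₁ / D, ENNReal.div_pos (mul_ne_zero ht₀.ne' hd₁) hD', hs₁, fun a b => ?_⟩
  rw [hs, cancel _ _ _ hd₁ hd₁', cancel _ _ _ hd₂ hd₂', ENNReal.div_add_div_same]

namespace ModuleCat

open CategoryTheory Limits

variable {R S : Type u} [Ring R] [Ring S]

theorem finite_functor_obj (e : ModuleCat.{u} R ≌ ModuleCat.{u} S) (M : ModuleCat.{u} R)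
    [Module.Finite R M] : Module.Finite S (e.functor.obj M) := by
  let φ : Submodule R M ≃o Submodule S (e.functor.obj M) :=
    (subobjectModule M).symm.trans
      ((Subobject.lowerEquivalence (MonoOver.congr M e)).toOrderIso.trans (subobjectModule _))
  rw [Module.finite_def, Submodule.fg_iff_compact, ← φ.map_top]
  exact φ.isCompactElement_apply ((Submodule.fg_iff_compact _).1 Module.Finite.fg_top)

section

variable {M N P Q : Type u} [AddCommGroup M] [Module R M] [AddCommGroup N] [Module R N]
  [AddCommGroup P] [Module R P] [AddCommGroup Q] [Module R Q]

theorem hom_ext_prod {X : ModuleCat.{u} R} {f g : X ⟶ of R (M × N)}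
    (h₁ : f ≫ ofHom (LinearMap.fst R M N) = g ≫ ofHom (LinearMap.fst R M N))
    (h₂ : f ≫ ofHom (LinearMap.snd R M N) = g ≫ ofHom (LinearMap.snd R M N)) : f = g :=
  BinaryFan.IsLimit.hom_ext (binaryProductLimitCone (of R M) (of R N)).isLimit h₁ h₂

theorem ofHom_prodMap_comp_fst (f : M →ₗ[R] N) (g : P →ₗ[R] Q) :
    ofHom (f.prodMap g) ≫ ofHom (LinearMap.fst R N Q) = ofHom (LinearMap.fst R M P) ≫ ofHom f :=
  rfl

theorem ofHom_prodMap_comp_snd (f : M →ₗ[R] N) (g : P →ₗ[R] Q) :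
    ofHom (f.prodMap g) ≫ ofHom (LinearMap.snd R N Q) = ofHom (LinearMap.snd R M P) ≫ ofHom g :=
  rfl

end

instance (e : ModuleCat.{u} R ≌ ModuleCat.{u} S) : e.functor.Additive :=
  e.functor.additive_of_preserves_binary_products

end ModuleCat

namespace CategoryTheory.Functor

open Limits

variable {R S : Type u} [Ring R] [Ring S] (F : ModuleCat.{u} R ⥤ ModuleCat.{u} S)

section Additive

variable [F.Additive]

instance (M N : ModuleCat.{u} R) : PreservesBinaryBiproduct M N F :=
  have := preservesBinaryBiproducts_of_preservesBiproducts F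
  inferInstance

noncomputable def mapProdIso (M N : ModuleCat.{u} R) :
    F.obj (.of R (M × N)) ≅ .of S (F.obj M × F.obj N) :=
  F.mapIso (ModuleCat.biprodIsoProd M N).symm ≪≫ F.mapBiprod M N ≪≫ ModuleCat.biprodIsoProd _ _

theorem mapProdIso_hom_fst (M N : ModuleCat.{u} R) :
    (F.mapProdIso M N).hom ≫ ModuleCat.ofHom (LinearMap.fst S _ _) =
      F.map (ModuleCat.ofHom (LinearMap.fst R M N)) := by
  have := (Iso.inv_comp_eq _).1 (ModuleCat.biprodIsoProd_inv_comp_fst (F.obj M) (F.obj N))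
  simp only [mapProdIso, Iso.trans_hom, mapIso_hom, Iso.symm_hom, Category.assoc, ← this,
    mapBiprod_hom, biprod.lift_fst, ← F.map_comp, ModuleCat.biprodIsoProd_inv_comp_fst]

theorem mapProdIso_hom_snd (M N : ModuleCat.{u} R) :
    (F.mapProdIso M N).hom ≫ ModuleCat.ofHom (LinearMap.snd S _ _) =
      F.map (ModuleCat.ofHom (LinearMap.snd R M N)) := by
  have := (Iso.inv_comp_eq _).1 (ModuleCat.biprodIsoProd_inv_comp_snd (F.obj M) (F.obj N))
  simp only [mapProdIso, Iso.trans_hom, mapIso_hom, Iso.symm_hom, Category.assoc, ← this,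
    mapBiprod_hom, biprod.lift_snd, ← F.map_comp, ModuleCat.biprodIsoProd_inv_comp_snd]

variable {M N P Q : Type u} [AddCommGroup M] [Module R M] [AddCommGroup N] [Module R N]
  [AddCommGroup P] [Module R P] [AddCommGroup Q] [Module R Q]

theorem map_prodMap_comp_mapProdIso_hom (α : M →ₗ[R] N) (β : P →ₗ[R] Q) :
    F.map (ModuleCat.ofHom (α.prodMap β)) ≫ (F.mapProdIso (.of R N) (.of R Q)).hom =
      (F.mapProdIso (.of R M) (.of R P)).hom ≫
        ModuleCat.ofHom
          ((F.map (ModuleCat.ofHom α)).hom.prodMap (F.map (ModuleCat.ofHom β)).hom) := by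
  refine ModuleCat.hom_ext_prod ?_ ?_
  · rw [Category.assoc, mapProdIso_hom_fst, ← F.map_comp, ModuleCat.ofHom_prodMap_comp_fst,
      F.map_comp, Category.assoc, ModuleCat.ofHom_prodMap_comp_fst, ← Category.assoc,
      mapProdIso_hom_fst, ModuleCat.ofHom_hom]
  · rw [Category.assoc, mapProdIso_hom_snd, ← F.map_comp, ModuleCat.ofHom_prodMap_comp_snd,
      F.map_comp, Category.assoc, ModuleCat.ofHom_prodMap_comp_snd, ← Category.assoc,
      mapProdIso_hom_snd, ModuleCat.ofHom_hom]

noncomputable def mapPiIso (n : ℕ) (M : ModuleCat.{u} R) :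
    F.obj (.of R (Fin n → M)) ≅ .of S (Fin n → F.obj M) :=
  F.mapIso (ModuleCat.biproductIsoPi fun _ => M).symm ≪≫ F.mapBiproduct _ ≪≫
    ModuleCat.biproductIsoPi _

end Additive

noncomputable def mapQuotientRangeIso [F.PreservesZeroMorphisms]
    [PreservesColimitsOfShape WalkingParallelPair F] {M N : Type u} [AddCommGroup M] [Module R M]
    [AddCommGroup N] [Module R N] (α : M →ₗ[R] N) :
    F.obj (.of R (N ⧸ LinearMap.range α)) ≅
      .of S (F.obj (.of R N) ⧸ LinearMap.range (F.map (ModuleCat.ofHom α)).hom) :=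
  F.mapIso (ModuleCat.cokernelIsoRangeQuotient (ModuleCat.ofHom α)).symm ≪≫
    PreservesCokernel.iso F _ ≪≫ ModuleCat.cokernelIsoRangeQuotient _

end CategoryTheory.Functor

namespace ExtendedSylvesterMapRank

open CategoryTheory Limits Filter Topology

section Basic

variable {A : Type u} [Ring A] (rk : ExtendedSylvesterMapRank A)

@[ext]
theorem ext {rk₁ rk₂ : ExtendedSylvesterMapRank A}
    (h : ∀ (M N : Type u) [AddCommGroup M] [Module A M] [AddCommGroup N] [Module A N]
      (α : M →ₗ[A] N), rk₁.r α = rk₂.r α) : rk₁ = rk₂ := by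
  obtain ⟨r₁⟩ := rk₁
  obtain ⟨r₂⟩ := rk₂
  congr
  funext M N _ _ _ _ α
  exact h M N α

section Linear

variable {M N P M' N' : Type u} [AddCommGroup M] [Module A M] [AddCommGroup N] [Module A N]
  [AddCommGroup P] [Module A P] [AddCommGroup M'] [Module A M'] [AddCommGroup N'] [Module A N']

theorem r_comp_le_left (α : M →ₗ[A] N) (β : N →ₗ[A] P) : rk.r (β ∘ₗ α) ≤ rk.r α :=
  (rk.r_comp α β).trans (min_le_left _ _)

theorem r_comp_le_right (α : M →ₗ[A] N) (β : N →ₗ[A] P) : rk.r (β ∘ₗ α) ≤ rk.r β :=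
  (rk.r_comp α β).trans (min_le_right _ _)

theorem r_equiv_comp_equiv (g : N ≃ₗ[A] N') (α : M →ₗ[A] N) (f : M' ≃ₗ[A] M) :
    rk.r (g.toLinearMap ∘ₗ α ∘ₗ f.toLinearMap) = rk.r α := by
  refine le_antisymm ((rk.r_comp_le_left _ _).trans (rk.r_comp_le_right _ _)) ?_
  calc rk.r α = rk.r (g.symm.toLinearMap ∘ₗ (g.toLinearMap ∘ₗ α ∘ₗ f.toLinearMap) ∘ₗ
        f.symm.toLinearMap) := by congr 1; ext; simp
    _ ≤ rk.r (g.toLinearMap ∘ₗ α ∘ₗ f.toLinearMap) :=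
      (rk.r_comp_le_left _ _).trans (rk.r_comp_le_right _ _)

theorem r_comp_equiv (α : M →ₗ[A] N) (f : M' ≃ₗ[A] M) :
    rk.r (α ∘ₗ f.toLinearMap) = rk.r α := by
  simpa using rk.r_equiv_comp_equiv (LinearEquiv.refl A N) α f

theorem r_equiv_comp (g : N ≃ₗ[A] N') (α : M →ₗ[A] N) :
    rk.r (g.toLinearMap ∘ₗ α) = rk.r α := by
  simpa using rk.r_equiv_comp_equiv g α (LinearEquiv.refl A M)

theorem r_id_congr (g : M ≃ₗ[A] N) :
    rk.r (LinearMap.id : M →ₗ[A] M) = rk.r (LinearMap.id : N →ₗ[A] N) := by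
  rw [← rk.r_equiv_comp_equiv g LinearMap.id g.symm]
  congr 1; ext; simp

theorem r_id_of_subsingleton [Subsingleton M] : rk.r (LinearMap.id : M →ₗ[A] M) = 0 := by
  rw [Subsingleton.elim (LinearMap.id : M →ₗ[A] M) 0, rk.r_zero]

theorem r_id_pi (n : ℕ) :
    rk.r (LinearMap.id : (Fin n → M) →ₗ[A] (Fin n → M)) = n * rk.r (LinearMap.id : M →ₗ[A] M) := by
  induction n with
  | zero => simp [rk.r_zero]
  | succ n ih =>
    rw [← rk.r_id_congr (Fin.consLinearEquiv A fun _ => M), ← LinearMap.prodMap_id,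
      rk.r_prodMap, ih]
    push_cast
    ring

theorem r_id_le_of_surjective (α : M →ₗ[A] N) (hα : Function.Surjective α) :
    rk.r (LinearMap.id : N →ₗ[A] N) ≤ rk.r (LinearMap.id : M →ₗ[A] M) := by
  have : Subsingleton (N ⧸ LinearMap.range α) := by
    rw [Submodule.Quotient.subsingleton_iff, LinearMap.range_eq_top.2 hα]
  rw [rk.additivity α, rk.r_id_of_subsingleton, add_zero]
  simpa using rk.r_comp_le_left LinearMap.id α

theorem r_id_ne_top [Module.Finite A M] : rk.r (LinearMap.id : M →ₗ[A] M) ≠ ⊤ := by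
  obtain ⟨n, q, hq⟩ := Module.Finite.exists_fin' A M
  refine ne_top_of_le_ne_top ?_ (rk.r_id_le_of_surjective q hq)
  simp [rk.r_id_pi, rk.r_id_ring]

end Linear

theorem r_hom_eq_of_comm_sq {X Y X' Y' : ModuleCat.{u} A} (φ : X ⟶ Y) (ψ : X' ⟶ Y')
    (i : X ≅ X') (j : Y ≅ Y') (h : φ ≫ j.hom = i.hom ≫ ψ) : rk.r φ.hom = rk.r ψ.hom := by
  rw [← rk.r_equiv_comp_equiv j.toLinearEquiv φ.hom i.symm.toLinearEquiv,
    ← (Iso.inv_comp_eq i).2 h]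
  rfl

section DirectLimit

variable {J : Type u} [Preorder J] [IsDirected J (· ≤ ·)] [Nonempty J] [DecidableEq J]
  {G : J → Type u} [∀ j, AddCommGroup (G j)] [∀ j, Module A (G j)]
  {f : ∀ i j, i ≤ j → G i →ₗ[A] G j} [DirectedSystem G (fun i j h => f i j h)]
  {c : Cocone (ModuleCat.directLimitDiagram G f)} {M : Type u} [AddCommGroup M] [Module A M]

theorem continuity_from_of_isColimit (hc : IsColimit c) (α : ∀ j, G j →ₗ[A] M) (αlim : c.pt →ₗ[A] M)
    (hα : ∀ j, αlim ∘ₗ (c.ι.app j).hom = α j) :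
    Tendsto (fun j => rk.r (α j)) atTop (𝓝 (rk.r αlim)) := by
  let e := hc.coconePointUniqueUpToIso (ModuleCat.directLimitIsColimit G f)
  have hι (j : J) : (e.inv.hom ∘ₗ Module.DirectLimit.of A J G f j) = (c.ι.app j).hom :=
    congrArg ModuleCat.Hom.hom (hc.comp_coconePointUniqueUpToIso_inv _ j)
  rw [← rk.r_comp_equiv αlim e.symm.toLinearEquiv]
  refine rk.continuity_from J G f M α _ (fun i j hij => ?_) (fun j => ?_)
  · rw [← hα i, ← hα j, ← c.w (homOfLE hij)]
    rfl
  · rw [← hα j, ← hι j]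
    rfl

theorem continuity_to_of_isColimit (hc : IsColimit c) [Module.Finite A M] (α : ∀ j, M →ₗ[A] G j)
    (αlim : M →ₗ[A] c.pt) (hcompat : ∀ i j (h : i ≤ j), f i j h ∘ₗ α i = α j)
    (hα : ∀ j, (c.ι.app j).hom ∘ₗ α j = αlim) :
    Tendsto (fun j => rk.r (α j)) atTop (𝓝 (rk.r αlim)) := by
  let e := hc.coconePointUniqueUpToIso (ModuleCat.directLimitIsColimit G f)
  have hι (j : J) : (e.hom.hom ∘ₗ (c.ι.app j).hom) = Module.DirectLimit.of A J G f j :=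
    congrArg ModuleCat.Hom.hom (hc.comp_coconePointUniqueUpToIso_hom _ j)
  rw [← rk.r_equiv_comp e.toLinearEquiv αlim]
  refine rk.continuity_to J G f M inferInstance α _ hcompat (fun j => ?_)
  rw [← hα j, ← hι j]
  rfl

end DirectLimit

end Basic

variable {R S : Type u} [Ring R] [Ring S]

section Functor

variable (F : ModuleCat.{u} R ⥤ ModuleCat.{u} S) (rk : ExtendedSylvesterMapRank S)
  {M N P Q : Type u} [AddCommGroup M] [Module R M] [AddCommGroup N] [Module R N]
  [AddCommGroup P] [Module R P] [AddCommGroup Q] [Module R Q]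

theorem r_map_id :
    rk.r (F.map (ModuleCat.ofHom (LinearMap.id : M →ₗ[R] M))).hom =
      rk.r (LinearMap.id : F.obj (.of R M) →ₗ[S] F.obj (.of R M)) := by
  rw [ModuleCat.ofHom_id, F.map_id, ModuleCat.hom_id]

theorem r_map_prodMap [F.Additive] (α : M →ₗ[R] N) (β : P →ₗ[R] Q) :
    rk.r (F.map (ModuleCat.ofHom (α.prodMap β))).hom =
      rk.r (F.map (ModuleCat.ofHom α)).hom + rk.r (F.map (ModuleCat.ofHom β)).hom :=
  (rk.r_hom_eq_of_comm_sq _ _ _ _ (F.map_prodMap_comp_mapProdIso_hom α β)).trans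
    (rk.r_prodMap _ _)

theorem r_id_map_pi [F.Additive] (n : ℕ) :
    rk.r (LinearMap.id : F.obj (.of R (Fin n → M)) →ₗ[S] F.obj (.of R (Fin n → M))) =
      n * rk.r (LinearMap.id : F.obj (.of R M) →ₗ[S] F.obj (.of R M)) := by
  rw [rk.r_id_congr (F.mapPiIso n (.of R M)).toLinearEquiv, rk.r_id_pi]

theorem r_id_map_eq_add [F.PreservesZeroMorphisms] [PreservesColimitsOfShape WalkingParallelPair F]
    (α : M →ₗ[R] N) :
    rk.r (LinearMap.id : F.obj (.of R N) →ₗ[S] F.obj (.of R N)) =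
      rk.r (F.map (ModuleCat.ofHom α)).hom +
        rk.r (LinearMap.id : F.obj (.of R (N ⧸ LinearMap.range α)) →ₗ[S]
          F.obj (.of R (N ⧸ LinearMap.range α))) := by
  rw [rk.additivity (F.map (ModuleCat.ofHom α)).hom,
    rk.r_id_congr (F.mapQuotientRangeIso α).toLinearEquiv]

section DirectLimit

variable {J : Type u} [Preorder J] {G : J → Type u} [∀ j, AddCommGroup (G j)]
  [∀ j, Module R (G j)] (f : ∀ i j, i ≤ j → G i →ₗ[R] G j)
  [DirectedSystem G (fun i j h => f i j h)]

theorem directedSystem_map :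
    DirectedSystem (fun j => F.obj (.of R (G j)))
      (fun i j h => (F.map (ModuleCat.ofHom (f i j h))).hom) where
  map_self i x := congrArg (fun φ => φ.hom x) ((ModuleCat.directLimitDiagram G f ⋙ F).map_id i)
  map_map _ _ _ hij hjk x := congrArg (fun φ => φ.hom x)
    ((ModuleCat.directLimitDiagram G f ⋙ F).map_comp (homOfLE hij) (homOfLE hjk)).symm

variable [IsDirected J (· ≤ ·)] [Nonempty J] [DecidableEq J] [PreservesColimitsOfShape J F]

theorem continuity_from_map (α : ∀ j, G j →ₗ[R] M) (αlim : Module.DirectLimit G f →ₗ[R] M)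
    (hα : ∀ j, αlim ∘ₗ Module.DirectLimit.of R J G f j = α j) :
    Tendsto (fun j => rk.r (F.map (ModuleCat.ofHom (α j))).hom) atTop
      (𝓝 (rk.r (F.map (ModuleCat.ofHom αlim)).hom)) := by
  have := directedSystem_map F f
  refine rk.continuity_from_of_isColimit (G := fun j => F.obj (.of R (G j)))
    (f := fun i j h => (F.map (ModuleCat.ofHom (f i j h))).hom)
    (isColimitOfPreserves F (ModuleCat.directLimitIsColimit G f)) _ _ fun j => ?_
  rw [← hα j, ModuleCat.ofHom_comp, F.map_comp, ModuleCat.hom_comp]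
  rfl

theorem continuity_to_map [Module.Finite S (F.obj (.of R M))] (α : ∀ j, M →ₗ[R] G j)
    (αlim : M →ₗ[R] Module.DirectLimit G f) (hcompat : ∀ i j (h : i ≤ j), f i j h ∘ₗ α i = α j)
    (hα : ∀ j, Module.DirectLimit.of R J G f j ∘ₗ α j = αlim) :
    Tendsto (fun j => rk.r (F.map (ModuleCat.ofHom (α j))).hom) atTop
      (𝓝 (rk.r (F.map (ModuleCat.ofHom αlim)).hom)) := by
  have := directedSystem_map F f
  refine rk.continuity_to_of_isColimit (G := fun j => F.obj (.of R (G j)))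
    (f := fun i j h => (F.map (ModuleCat.ofHom (f i j h))).hom)
    (isColimitOfPreserves F (ModuleCat.directLimitIsColimit G f)) _ _ (fun i j h => ?_) fun j => ?_
  · rw [← hcompat i j h, ModuleCat.ofHom_comp, F.map_comp, ModuleCat.hom_comp]
  · rw [← hα j, ModuleCat.ofHom_comp, F.map_comp, ModuleCat.hom_comp]
    rfl

end DirectLimit

end Functor

section Equivalence

variable (e : ModuleCat.{u} R ≌ ModuleCat.{u} S) (rk : ExtendedSylvesterMapRank S)

theorem r_id_functor_obj_self_ne_top :
    rk.r (LinearMap.id : e.functor.obj (.of R R) →ₗ[S] e.functor.obj (.of R R)) ≠ ⊤ :=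
  have := ModuleCat.finite_functor_obj e (.of R R)
  rk.r_id_ne_top

theorem r_id_functor_obj_self_ne_zero :
    rk.r (LinearMap.id : e.functor.obj (.of R R) →ₗ[S] e.functor.obj (.of R R)) ≠ 0 := by
  have : Module.Finite R (e.inverse.obj (.of S S)) := ModuleCat.finite_functor_obj e.symm _
  obtain ⟨m, q, hq⟩ := Module.Finite.exists_fin' R (e.inverse.obj (.of S S))
  have : Epi (ModuleCat.ofHom q) := (ModuleCat.epi_iff_surjective _).2 hq
  have hsurj := (ModuleCat.epi_iff_surjective
    (e.functor.map (ModuleCat.ofHom q) ≫ e.counitIso.hom.app (.of S S))).1 inferInstance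
  have h := rk.r_id_le_of_surjective _ hsurj
  rw [rk.r_id_map_pi e.functor, show rk.r (LinearMap.id : (ModuleCat.of S S) →ₗ[S] _) = 1 from
    rk.r_id_ring] at h
  intro h0
  simp [h0] at h

noncomputable def comap : ExtendedSylvesterMapRank R where
  r α := rk.r (e.functor.map (ModuleCat.ofHom α)).hom /
    rk.r (LinearMap.id : e.functor.obj (.of R R) →ₗ[S] e.functor.obj (.of R R))
  r_zero M N _ _ _ _ := by simp [rk.r_zero]
  r_id_ring := by
    rw [r_map_id]
    exact ENNReal.div_self (rk.r_id_functor_obj_self_ne_zero e) (rk.r_id_functor_obj_self_ne_top e)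
  r_comp α β := by
    rw [ModuleCat.ofHom_comp, e.functor.map_comp, ModuleCat.hom_comp]
    exact le_min (ENNReal.div_le_div_right (rk.r_comp_le_left _ _) _)
      (ENNReal.div_le_div_right (rk.r_comp_le_right _ _) _)
  r_prodMap α β := by rw [r_map_prodMap, ENNReal.add_div]
  continuity_from J _ _ _ _ G _ _ f _ M _ _ α αlim _ hlim :=
    ENNReal.Tendsto.div_const (rk.continuity_from_map e.functor f α αlim hlim)
      (.inr (rk.r_id_functor_obj_self_ne_zero e))
  continuity_to J _ _ _ _ G _ _ f _ M _ _ hM α αlim hcompat hlim :=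
    have := ModuleCat.finite_functor_obj e (.of R M)
    ENNReal.Tendsto.div_const (rk.continuity_to_map e.functor f α αlim hcompat hlim)
      (.inr (rk.r_id_functor_obj_self_ne_zero e))
  additivity α := by
    simp only [r_map_id]
    rw [rk.r_id_map_eq_add e.functor α, ENNReal.add_div]

theorem comap_r {M N : Type u} [AddCommGroup M] [Module R M] [AddCommGroup N] [Module R N]
    (α : M →ₗ[R] N) :
    (comap e rk).r α = rk.r (e.functor.map (ModuleCat.ofHom α)).hom /
      rk.r (LinearMap.id : e.functor.obj (.of R R) →ₗ[S] e.functor.obj (.of R R)) :=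
  rfl

theorem r_functor_map_inverse_map {X Y : ModuleCat.{u} S} (φ : X ⟶ Y) :
    rk.r (e.functor.map (e.inverse.map φ)).hom = rk.r φ.hom :=
  rk.r_hom_eq_of_comm_sq _ _ (e.counitIso.app X) (e.counitIso.app Y) (e.counit.naturality φ)

theorem comap_symm_comap : comap e.symm (comap e rk) = rk := by
  ext M N α
  have hS : rk.r (LinearMap.id : e.functor.obj (e.inverse.obj (.of S S)) →ₗ[S]
      e.functor.obj (e.inverse.obj (.of S S))) = 1 := by
    simpa [rk.r_id_ring] using rk.r_functor_map_inverse_map e (𝟙 (ModuleCat.of S S))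
  rw [comap_r, comap_r, comap_r, Equivalence.symm_functor, ModuleCat.ofHom_hom,
    r_functor_map_inverse_map, r_map_id, hS, ModuleCat.hom_ofHom, one_div,
    div_eq_mul_inv _ (_⁻¹), inv_inv, ENNReal.div_mul_cancel (rk.r_id_functor_obj_self_ne_zero e)
      (rk.r_id_functor_obj_self_ne_top e)]

end Equivalence

end ExtendedSylvesterMapRank

section

open ExtendedSylvesterMapRank

variable {R S : Type u} [Ring R] [Ring S] (e : ModuleCat.{u} R ≌ ModuleCat.{u} S)

theorem IsExtremeRank.comap {rk : ExtendedSylvesterMapRank S} (hrk : IsExtremeRank S rk) :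
    IsExtremeRank R (ExtendedSylvesterMapRank.comap e rk) := by
  intro rk₁ rk₂ t ht₀ ht₁ hmix
  obtain ⟨s, hs₀, hs₁, hs⟩ := ENNReal.exists_convexComb_div_eq ht₀ ht₁
    (rk₁.r_id_functor_obj_self_ne_zero e.symm) (rk₁.r_id_functor_obj_self_ne_top e.symm)
    (rk₂.r_id_functor_obj_self_ne_zero e.symm) (rk₂.r_id_functor_obj_self_ne_top e.symm)
  have h := hrk (ExtendedSylvesterMapRank.comap e.symm rk₁)
    (ExtendedSylvesterMapRank.comap e.symm rk₂) s hs₀ hs₁ fun M N _ _ _ _ α => by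
    conv_lhs => rw [← comap_symm_comap e rk]
    exact (congrArg₂ (· / ·) (hmix _ _ _) (hmix _ _ _)).trans (hs _ _)
  rw [← comap_symm_comap e.symm rk₁, h, comap_symm_comap e.symm rk₂]

theorem isExtremeRank_comap_iff (rk : ExtendedSylvesterMapRank S) :
    IsExtremeRank R (comap e rk) ↔ IsExtremeRank S rk :=
  ⟨fun h => comap_symm_comap e rk ▸ h.comap e.symm, IsExtremeRank.comap e⟩

end

/-- The Morita equivalence is encoded by the equivalence `e` of module categories: `e.functor`
plays the role of `V ⊗_R -` and `e.inverse` that of `W ⊗_S -`. -/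
theorem moritaEquivalence_sylvesterRank_general (R S : Type u) [Ring R] [Ring S]
    (e : ModuleCat.{u} R ≌ ModuleCat.{u} S) :
    ∃ (Φ : ExtendedSylvesterMapRank S → ExtendedSylvesterMapRank R)
      (Ψ : ExtendedSylvesterMapRank R → ExtendedSylvesterMapRank S),
      (∀ (rk : ExtendedSylvesterMapRank S) (M N : Type u) [AddCommGroup M] [Module R M]
        [AddCommGroup N] [Module R N] (α : M →ₗ[R] N),
        (Φ rk).r α =
          rk.r ((e.functor.map (ModuleCat.ofHom α)).hom :
              ↑(e.functor.obj (ModuleCat.of R M)) →ₗ[S] ↑(e.functor.obj (ModuleCat.of R N))) /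
            rk.r (LinearMap.id :
              ↑(e.functor.obj (ModuleCat.of R R)) →ₗ[S] ↑(e.functor.obj (ModuleCat.of R R)))) ∧
      (∀ (rk : ExtendedSylvesterMapRank R) (M N : Type u) [AddCommGroup M] [Module S M]
        [AddCommGroup N] [Module S N] (α : M →ₗ[S] N),
        (Ψ rk).r α =
          rk.r ((e.inverse.map (ModuleCat.ofHom α)).hom :
              ↑(e.inverse.obj (ModuleCat.of S M)) →ₗ[R] ↑(e.inverse.obj (ModuleCat.of S N))) /
            rk.r (LinearMap.id :
              ↑(e.inverse.obj (ModuleCat.of S S)) →ₗ[R] ↑(e.inverse.obj (ModuleCat.of S S)))) ∧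
      (∀ rk, Ψ (Φ rk) = rk) ∧ (∀ rk, Φ (Ψ rk) = rk) ∧
      (∀ rk, IsExtremeRank S rk ↔ IsExtremeRank R (Φ rk)) ∧
      (∀ rk, IsExtremeRank R rk ↔ IsExtremeRank S (Ψ rk)) :=
  ⟨ExtendedSylvesterMapRank.comap e, ExtendedSylvesterMapRank.comap e.symm,
    fun _ _ _ _ _ _ _ _ => rfl, fun _ _ _ _ _ _ _ _ => rfl,
    ExtendedSylvesterMapRank.comap_symm_comap e, ExtendedSylvesterMapRank.comap_symm_comap e.symm,
    fun rk => (isExtremeRank_comap_iff e rk).symm,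
    fun rk => (isExtremeRank_comap_iff e.symm rk).symm⟩

/-- Morita invariance. Let `R` and `S` be Morita equivalent unital
rings, via an (additive) equivalence `e` of their module categories — which is induced by
Morita equivalence bimodules `_R W_S`, `_S V_R`, the functor `e.functor` corresponding to
`V ⊗_R -` and `e.inverse` to `W ⊗_S -`. Then the induced maps `f_V* : P(S) → P(R)`,
`rk ↦ (α ↦ rk(V ⊗ α)/rk(id_V))`, and `f_W* : P(R) → P(S)` on spaces of Sylvester rank
functions are mutually inverse bijections preserving extreme points. -/
theorem moritaEquivalence_sylvesterRank (R S : Type u) [Ring R] [Ring S]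
    (e : ModuleCat.{u} R ≌ ModuleCat.{u} S)
    [e.functor.Additive] [e.inverse.Additive] :
    ∃ (Φ : ExtendedSylvesterMapRank S → ExtendedSylvesterMapRank R)
      (Ψ : ExtendedSylvesterMapRank R → ExtendedSylvesterMapRank S),
      (∀ (rk : ExtendedSylvesterMapRank S) (M N : Type u) [AddCommGroup M] [Module R M]
        [AddCommGroup N] [Module R N] (α : M →ₗ[R] N),
        (Φ rk).r α =
          rk.r ((e.functor.map (ModuleCat.ofHom α)).hom :
              ↑(e.functor.obj (ModuleCat.of R M)) →ₗ[S] ↑(e.functor.obj (ModuleCat.of R N))) /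
            rk.r (LinearMap.id :
              ↑(e.functor.obj (ModuleCat.of R R)) →ₗ[S] ↑(e.functor.obj (ModuleCat.of R R)))) ∧
      (∀ (rk : ExtendedSylvesterMapRank R) (M N : Type u) [AddCommGroup M] [Module S M]
        [AddCommGroup N] [Module S N] (α : M →ₗ[S] N),
        (Ψ rk).r α =
          rk.r ((e.inverse.map (ModuleCat.ofHom α)).hom :
              ↑(e.inverse.obj (ModuleCat.of S M)) →ₗ[R] ↑(e.inverse.obj (ModuleCat.of S N))) /
            rk.r (LinearMap.id :
              ↑(e.inverse.obj (ModuleCat.of S S)) →ₗ[R] ↑(e.inverse.obj (ModuleCat.of S S)))) ∧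
      (∀ rk, Ψ (Φ rk) = rk) ∧ (∀ rk, Φ (Ψ rk) = rk) ∧
      (∀ rk, IsExtremeRank S rk ↔ IsExtremeRank R (Φ rk)) ∧
      (∀ rk, IsExtremeRank R rk ↔ IsExtremeRank S (Ψ rk)) :=
  moritaEquivalence_sylvesterRank_general R S e
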